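/- Suppose the conditional preference probability given hidden context C satisfies P(L=1 | x,y,y', C=c) = σ(r_c(x,y) − r_c(x,y')) for context-specific reward functions r_c, and C takes two values with probabilities p and 1−p. Then the marginal preference probability P(L=1 | x,y,y') = p·σ(r_0(x,y) − r_0(x,y')) + (1−p)·σ(r_1(x,y) − r_1(x,y')) is in general not of BTL form: there exist reward values such that no single reward function r satisfies σ(r(x,y) − r(x,y')) = P(L=1 | x,y,y') for all pairs simultaneously while respecting transitivity of the induced strict preference; concretely, for three responses y₁, y₂, y₃ there exist context-specific rewards such that the marginal probabilities satisfy P(y₁ ≻ y₂) > 1/2, P(y₂ ≻ y₃) > 1/2, but P(y₁ ≻ y₃) < 1/2. -/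

import Mathlib

/-!
With rewards `r = log w` a BTL model prefers `i` to `j` with probability `w i / (w i + w j)`,
so everything reduces to rational arithmetic. Mix, with weight `1/3`, a context with weights
`(100, 10, 1)` and one with weights `(1, 2, 4)`. The first context's preferences saturate:
it prefers `y₁` to `y₃` hardly more than it prefers `y₁` to `y₂`. The second context's preference
for `y₃` over `y₁` keeps growing with the distance in its ranking. The adjacent comparisons are
then won by the first context (`52/99` each), and the distant one by the second (`P(y₁ ≻ y₃) ≈ 0.46`).
-/

noncomputable def logistic (t : ℝ) : ℝ := 1 / (1 + Real.exp (-t))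

lemma logistic_log_sub_log {a b : ℝ} (ha : 0 < a) (hb : 0 < b) :
    logistic (Real.log a - Real.log b) = a / (a + b) := by
  rw [logistic, neg_sub, ← Real.log_div hb.ne' ha.ne', Real.exp_log (div_pos hb ha)]
  field_simp

/-- A mixture of two BTL models is in general not of BTL form: there exist a mixing
weight `p ∈ (0,1)` and context-specific rewards `r₀, r₁` on three responses such
that the marginal preference probabilities are intransitive:
`P(y₁ ≻ y₂) > 1/2`, `P(y₂ ≻ y₃) > 1/2`, but `P(y₁ ≻ y₃) < 1/2`. -/
theorem stmt_11 :
    ∃ (p : ℝ), p ∈ Set.Ioo (0 : ℝ) 1 ∧ ∃ r₀ r₁ : Fin 3 → ℝ,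
      (∀ q : Fin 3 → Fin 3 → ℝ,
        (∀ i j, q i j =
          p * logistic (r₀ i - r₀ j) + (1 - p) * logistic (r₁ i - r₁ j)) →
        q 0 1 > 1 / 2 ∧ q 1 2 > 1 / 2 ∧ q 0 2 < 1 / 2) := by
  refine ⟨1 / 3, ⟨by norm_num, by norm_num⟩,
    fun i => Real.log (![100, 10, 1] i), fun i => Real.log (![1, 2, 4] i), ?_⟩
  intro q hq
  have pos₀ : ∀ i, (0 : ℝ) < ![100, 10, 1] i := by intro i; fin_cases i <;> norm_num
  have pos₁ : ∀ i, (0 : ℝ) < ![1, 2, 4] i := by intro i; fin_cases i <;> norm_num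
  simp only [hq, logistic_log_sub_log (pos₀ _) (pos₀ _), logistic_log_sub_log (pos₁ _) (pos₁ _)]
  norm_num [Matrix.cons_val_two, Matrix.tail_cons, Matrix.head_cons]
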